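/- Let r_max ≥ 0 and suppose π̂, r : V → ℝ satisfy, for every t ∈ V, the invariant π_s(t) = π̂(t) + Σ_{u∈V} r(u)·π_u(t), with 0 ≤ r(u) ≤ r_max·d(u) for every u ∈ V. Then for every node t ∈ V, 0 ≤ π_s(t) − π̂(t) ≤ r_max·d(t); that is, the normalized additive error satisfies |π_s(t)/d(t) − π̂(t)/d(t)| ≤ r_max at every node. -/

import Mathlib

open Finset

/-- Weighted degree of a node. -/
noncomputable def deg {V : Type*} [Fintype V] (A : V → V → ℝ) (u : V) : ℝ := ∑ v, A u v

/-- Transition matrix `P t v = A t v / d v` (column-stochastic). -/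
noncomputable def transP {V : Type*} [Fintype V] (A : V → V → ℝ) : Matrix V V ℝ :=
  Matrix.of fun t v => A t v / deg A v

/-- Single-source personalized PageRank: `π_x = Σ_{ℓ≥0} α(1-α)^ℓ P^ℓ e_x`. -/
noncomputable def ppr {V : Type*} [Fintype V] [DecidableEq V]
    (A : V → V → ℝ) (α : ℝ) (x t : V) : ℝ :=
  ∑' ℓ : ℕ, α * (1 - α) ^ ℓ * ((transP A ^ ℓ).mulVec (Pi.single x 1)) t

/-!
`P` fixes the degree vector: `(P d)(t) = Σ_v A(t,v) = d(t)`, hence `Σ_u P^ℓ(t,u) d(u) = d(t)`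
for every `ℓ`, and since the weights `α(1-α)^ℓ` sum to one, `Σ_u d(u) π_u(t) = d(t)`.
Subtracting the invariant, `π_s(t) - π̂(t) = Σ_u r(u) π_u(t)` lies between `0` and
`Σ_u r_max d(u) π_u(t) = r_max d(t)`.
-/

open Matrix

theorem Matrix.pow_mulVec_of_mulVec_eq {n R : Type*} [Fintype n] [DecidableEq n] [Semiring R]
    {M : Matrix n n R} {x : n → R} (hx : M *ᵥ x = x) (ℓ : ℕ) : (M ^ ℓ) *ᵥ x = x := by
  induction ℓ with
  | zero => rw [pow_zero, one_mulVec]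
  | succ ℓ ih => rw [pow_succ, ← mulVec_mulVec, hx, ih]

theorem hasSum_mul_one_sub_pow {α : ℝ} (hα : α ∈ Set.Ioc (0 : ℝ) 1) :
    HasSum (fun ℓ : ℕ => α * (1 - α) ^ ℓ) 1 := by
  have h := (hasSum_geometric_of_lt_one (sub_nonneg.2 hα.2) (sub_lt_self 1 hα.1)).mul_left α
  rwa [sub_sub_cancel, mul_inv_cancel₀ hα.1.ne'] at h

section PageRank

variable {V : Type*} [Fintype V] {A : V → V → ℝ}

theorem transP_nonneg (hnonneg : ∀ u v, 0 ≤ A u v) (hdeg : ∀ u, 0 < deg A u) (t v : V) :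
    0 ≤ transP A t v :=
  div_nonneg (hnonneg t v) (hdeg v).le

theorem transP_mulVec_deg (hdeg : ∀ u, 0 < deg A u) : transP A *ᵥ deg A = deg A := by
  ext t
  simp only [mulVec, dotProduct, transP, of_apply, div_mul_cancel₀ _ (hdeg _).ne']
  rfl

theorem sum_transP_pow_mul_deg (hdeg : ∀ u, 0 < deg A u) [DecidableEq V] (ℓ : ℕ) (t : V) :
    ∑ u, (transP A ^ ℓ) t u * deg A u = deg A t :=
  congrFun (pow_mulVec_of_mulVec_eq (transP_mulVec_deg hdeg) ℓ) t

theorem transP_pow_mul_deg_le (hnonneg : ∀ u v, 0 ≤ A u v) (hdeg : ∀ u, 0 < deg A u)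
    [DecidableEq V] (ℓ : ℕ) (t u : V) : (transP A ^ ℓ) t u * deg A u ≤ deg A t := by
  rw [← sum_transP_pow_mul_deg hdeg ℓ t]
  exact single_le_sum (f := fun v => (transP A ^ ℓ) t v * deg A v)
    (fun v _ => mul_nonneg (pow_apply_nonneg (transP_nonneg hnonneg hdeg) ℓ t v) (hdeg v).le)
    (mem_univ u)

variable [DecidableEq V] {α : ℝ}

theorem ppr_eq_tsum (x t : V) :
    ppr A α x t = ∑' ℓ : ℕ, α * (1 - α) ^ ℓ * (transP A ^ ℓ) t x := by
  simp only [ppr, mulVec_single_one, col_apply]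

theorem sum_deg_mul_ppr (hnonneg : ∀ u v, 0 ≤ A u v) (hdeg : ∀ u, 0 < deg A u)
    (hα : α ∈ Set.Ioc (0 : ℝ) 1) (t : V) :
    ∑ u, deg A u * ppr A α u t = deg A t := by
  have hweights := hasSum_mul_one_sub_pow hα
  have hsummable (u : V) :
      Summable fun ℓ : ℕ => deg A u * (α * (1 - α) ^ ℓ * (transP A ^ ℓ) t u) := by
    have hc (ℓ : ℕ) : 0 ≤ α * (1 - α) ^ ℓ :=
      mul_nonneg hα.1.le (pow_nonneg (sub_nonneg.2 hα.2) ℓ)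
    refine (hweights.summable.mul_right (deg A t)).of_nonneg_of_le (fun ℓ => ?_) (fun ℓ => ?_)
    · exact mul_nonneg (hdeg u).le
        (mul_nonneg (hc ℓ) (pow_apply_nonneg (transP_nonneg hnonneg hdeg) ℓ t u))
    · calc _ = α * (1 - α) ^ ℓ * ((transP A ^ ℓ) t u * deg A u) := by ring
        _ ≤ _ := mul_le_mul_of_nonneg_left (transP_pow_mul_deg_le hnonneg hdeg ℓ t u) (hc ℓ)
  calc ∑ u, deg A u * ppr A α u t
      = ∑ u, ∑' ℓ : ℕ, deg A u * (α * (1 - α) ^ ℓ * (transP A ^ ℓ) t u) := by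
        simp only [ppr_eq_tsum, tsum_mul_left]
    _ = ∑' ℓ : ℕ, α * (1 - α) ^ ℓ * ∑ u, (transP A ^ ℓ) t u * deg A u := by
        rw [← Summable.tsum_finsetSum fun u _ => hsummable u]
        refine tsum_congr fun ℓ => ?_
        rw [mul_sum]
        exact sum_congr rfl fun u _ => by ring
    _ = deg A t := by
        simp only [sum_transP_pow_mul_deg hdeg, tsum_mul_right, hweights.tsum_eq, one_mul]

theorem ppr_nonneg (hnonneg : ∀ u v, 0 ≤ A u v) (hdeg : ∀ u, 0 < deg A u)
    (hα : α ∈ Set.Icc (0 : ℝ) 1) (x t : V) : 0 ≤ ppr A α x t := by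
  rw [ppr_eq_tsum]
  exact tsum_nonneg fun ℓ => mul_nonneg (mul_nonneg hα.1 (pow_nonneg (sub_nonneg.2 hα.2) ℓ))
    (pow_apply_nonneg (transP_nonneg hnonneg hdeg) ℓ t x)

end PageRank

theorem localpush_normalized_additive_error_general
    {V : Type*} [Fintype V] [DecidableEq V]
    (A : V → V → ℝ)
    (hnonneg : ∀ u v : V, 0 ≤ A u v)
    (hdeg : ∀ u : V, 0 < deg A u)
    (α : ℝ) (hα : α ∈ Set.Ioo (0 : ℝ) 1)
    (s : V)
    (rmax : ℝ)
    (piHat r : V → ℝ)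
    (hinv : ∀ t : V, ppr A α s t = piHat t + ∑ u, r u * ppr A α u t)
    (hr : ∀ u : V, 0 ≤ r u ∧ r u ≤ rmax * deg A u) :
    ∀ t : V,
      (0 ≤ ppr A α s t - piHat t) ∧
      (ppr A α s t - piHat t ≤ rmax * deg A t) ∧
      (|ppr A α s t / deg A t - piHat t / deg A t| ≤ rmax) := by
  intro t
  have hppr : ∀ u, 0 ≤ ppr A α u t :=
    fun u => ppr_nonneg hnonneg hdeg (Set.Ioo_subset_Icc_self hα) u t
  have hdiff : ppr A α s t - piHat t = ∑ u, r u * ppr A α u t := by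
    rw [hinv t, add_sub_cancel_left]
  have hlower : 0 ≤ ppr A α s t - piHat t :=
    hdiff ▸ sum_nonneg fun u _ => mul_nonneg (hr u).1 (hppr u)
  have hupper : ppr A α s t - piHat t ≤ rmax * deg A t :=
    calc ppr A α s t - piHat t = ∑ u, r u * ppr A α u t := hdiff
      _ ≤ ∑ u, rmax * (deg A u * ppr A α u t) :=
        sum_le_sum fun u _ => by
          rw [← mul_assoc]
          exact mul_le_mul_of_nonneg_right (hr u).2 (hppr u)
      _ = rmax * deg A t := by
        rw [← mul_sum, sum_deg_mul_ppr hnonneg hdeg (Set.Ioo_subset_Ioc_self hα)]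
  refine ⟨hlower, hupper, ?_⟩
  rw [div_sub_div_same, abs_div, abs_of_nonneg hlower, abs_of_pos (hdeg t),
    div_le_iff₀ (hdeg t)]
  exact hupper

/-- **Normalized additive error of LocalPush (Fact 2.3)**: if the LocalPush invariant
holds and every residue satisfies `0 ≤ r(u) ≤ r_max·d(u)`, then for every node `t`,
`0 ≤ π_s(t) − π̂(t) ≤ r_max·d(t)`; that is, the normalized additive error is at most
`r_max` at every node. -/
theorem localpush_normalized_additive_error
    {V : Type*} [Fintype V] [DecidableEq V] [Nonempty V]
    (A : V → V → ℝ)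
    (hsymm : ∀ u v : V, A u v = A v u)
    (hnonneg : ∀ u v : V, 0 ≤ A u v)
    (hdeg : ∀ u : V, 0 < deg A u)
    (α : ℝ) (hα : α ∈ Set.Ioo (0 : ℝ) 1)
    (s : V)
    (rmax : ℝ) (hrmax : 0 ≤ rmax)
    (piHat r : V → ℝ)
    (hinv : ∀ t : V, ppr A α s t = piHat t + ∑ u, r u * ppr A α u t)
    (hr : ∀ u : V, 0 ≤ r u ∧ r u ≤ rmax * deg A u) :
    ∀ t : V,
      (0 ≤ ppr A α s t - piHat t) ∧
      (ppr A α s t - piHat t ≤ rmax * deg A t) ∧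
      (|ppr A α s t / deg A t - piHat t / deg A t| ≤ rmax) :=
  localpush_normalized_additive_error_general A hnonneg hdeg α hα s rmax piHat r hinv hr
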